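/- Suppose |F| ≥ 3 or n ≥ 4. If A_1, A_2 are point-hyperplane anti-flags with A_1 ~_3 A_2, then the set {A_1, A_2}^{~_4} is a maximal element of the poset (𝔛, ⊆) (no member of 𝔛 properly contains it) and is not a minimal element of (𝔛, ⊆) (some member of 𝔛 is a proper subset of it). -/
import Mathlib

/-- A point-hyperplane anti-flag of `PG(n-1,F)`: a pair `(p, H)` where `p` is a point
(1-dimensional subspace of `F^n`), `H` is a hyperplane ((n-1)-dimensional subspace),
and `p` is not contained in `H`. -/
structure AntiFlag (F : Type*) [Field F] (n : ℕ) where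
  pt : Submodule F (Fin n → F)
  hyp : Submodule F (Fin n → F)
  pt_rank : Module.finrank F pt = 1
  hyp_rank : Module.finrank F hyp = n - 1
  not_incident : ¬ pt ≤ hyp

variable {F : Type*} [Field F] {n : ℕ}

/-- `A ~₁ B` : for some `j`, `p_j ⊆ H_{3-j}` and `p_{3-j} ⊄ H_j`. -/
def adj1 (A B : AntiFlag F n) : Prop :=
  A ≠ B ∧ ((A.pt ≤ B.hyp ∧ ¬ B.pt ≤ A.hyp) ∨ (B.pt ≤ A.hyp ∧ ¬ A.pt ≤ B.hyp))

/-- `A ~₂ B` : `p_1 ⊆ H_2` and `p_2 ⊆ H_1`. -/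
def adj2 (A B : AntiFlag F n) : Prop :=
  A ≠ B ∧ A.pt ≤ B.hyp ∧ B.pt ≤ A.hyp

/-- `A ~₃ B` : `p_1 = p_2` or `H_1 = H_2`. -/
def adj3 (A B : AntiFlag F n) : Prop :=
  A ≠ B ∧ (A.pt = B.pt ∨ A.hyp = B.hyp)

/-- `A ~₄ B` : `p_1 ≠ p_2`, `H_1 ≠ H_2`, `p_1 ⊄ H_2` and `p_2 ⊄ H_1`. -/
def adj4 (A B : AntiFlag F n) : Prop :=
  A ≠ B ∧ A.pt ≠ B.pt ∧ A.hyp ≠ B.hyp ∧ ¬ A.pt ≤ B.hyp ∧ ¬ B.pt ≤ A.hyp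

/-- `𝒳^{~ᵢ}` : the set of anti-flags `i`-adjacent to every anti-flag of `𝒳`. -/
def perpSet (adj : AntiFlag F n → AntiFlag F n → Prop) (X : Set (AntiFlag F n)) :
    Set (AntiFlag F n) := {B | ∀ A ∈ X, adj A B}


/-- The family `𝔛` of all sets `{B₁,B₂}^{~₄}` where `B₁ ≠ B₂` are not `4`-adjacent. -/
def famX (F : Type*) [Field F] (n : ℕ) : Set (Set (AntiFlag F n)) :=
  {X | ∃ B1 B2 : AntiFlag F n, B1 ≠ B2 ∧ ¬ adj4 B1 B2 ∧ X = perpSet adj4 {B1, B2}}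

open Module Submodule LinearMap

/-! ### Generic linear algebra helpers -/

section Helpers

variable {M : Type*} [AddCommGroup M] [Module F M]

private lemma helperG [FiniteDimensional F M] (T S : Submodule F M) (x : M)
    (hxT : x ∉ T) (hxS : x ∉ S) (hT1 : 1 ≤ finrank F T)
    (hT2 : 3 ≤ Cardinal.mk F ∨ 2 ≤ finrank F T) :
    ∃ t ∈ T, x + t ∉ S ∧ x + t ∉ Submodule.span F {x} := by
  have key : ∀ t ∈ T, t ≠ 0 → x + t ∉ Submodule.span F {x} := by
    intro t htT ht0 hmem
    rw [Submodule.mem_span_singleton] at hmem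
    obtain ⟨c, hc⟩ := hmem
    have ht : t = (c - 1) • x := by
      have := hc.symm
      rw [sub_smul, one_smul]
      rw [← this]; abel
    rcases eq_or_ne (c - 1) 0 with h | h
    · rw [h, zero_smul] at ht; exact ht0 ht
    · apply hxT
      have : x = (c - 1)⁻¹ • t := by rw [ht, smul_smul, inv_mul_cancel₀ h, one_smul]
      rw [this]; exact T.smul_mem _ htT
  have hbot : T ≠ ⊥ := by
    intro hb; rw [hb, finrank_bot] at hT1; omega
  obtain ⟨z, hzT, hz0⟩ := Submodule.exists_mem_ne_zero_of_ne_bot hbot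
  by_cases h1 : x + z ∉ S
  · exact ⟨z, hzT, h1, key z hzT hz0⟩
  push_neg at h1
  rcases hT2 with hF | hdim
  · obtain ⟨u, hu0, hu1⟩ := Cardinal.three_le hF 0 1
    refine ⟨u • z, T.smul_mem _ hzT, ?_, key _ (T.smul_mem _ hzT) (by simp [hu0, hz0])⟩
    intro h2
    apply hxS
    have hsub : (u - 1) • x ∈ S := by
      have := S.sub_mem (S.smul_mem u h1) h2
      have e : u • (x + z) - (x + u • z) = (u - 1) • x := by
        rw [smul_add, sub_smul, one_smul]; abel
      rwa [e] at this
    have hu : u - 1 ≠ 0 := sub_ne_zero.mpr hu1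
    have : x = (u - 1)⁻¹ • ((u - 1) • x) := by rw [smul_smul, inv_mul_cancel₀ hu, one_smul]
    rw [this]; exact S.smul_mem _ hsub
  · have hns : ¬ T ≤ Submodule.span F {z} := by
      intro hle
      have h1' := Submodule.finrank_mono (R := F) (M := M) hle
      rw [finrank_span_singleton hz0] at h1'
      omega
    obtain ⟨z', hz'T, hz'⟩ := SetLike.not_le_iff_exists.mp hns
    have hz'0 : z' ≠ 0 := fun h => hz' (h ▸ Submodule.zero_mem _)
    by_cases h2 : x + z' ∉ S
    · exact ⟨z', hz'T, h2, key _ hz'T hz'0⟩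
    push_neg at h2
    have hzz0 : z + z' ≠ 0 := by
      intro h
      apply hz'
      rw [eq_neg_of_add_eq_zero_right h]
      exact Submodule.neg_mem _ (Submodule.mem_span_singleton_self z)
    by_cases h3 : x + (z + z') ∉ S
    · exact ⟨z + z', T.add_mem hzT hz'T, h3, key _ (T.add_mem hzT hz'T) hzz0⟩
    push_neg at h3
    exfalso
    apply hxS
    have hz'S : z' ∈ S := by
      have := S.sub_mem h3 h1
      have e : (x + (z + z')) - (x + z) = z' := by abel
      rwa [e] at this
    have := S.sub_mem h2 hz'S
    have e : (x + z') - z' = x := by abel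
    rwa [e] at this

private lemma avoid2 {W S1 S2 : Submodule F M} (h1 : ∃ w ∈ W, w ∉ S1) (h2 : ∃ w ∈ W, w ∉ S2) :
    ∃ w ∈ W, w ∉ S1 ∧ w ∉ S2 := by
  obtain ⟨w1, hw1W, hw1⟩ := h1
  obtain ⟨w2, hw2W, hw2⟩ := h2
  by_cases ha : w1 ∉ S2
  · exact ⟨w1, hw1W, hw1, ha⟩
  by_cases hb : w2 ∉ S1
  · exact ⟨w2, hw2W, hb, hw2⟩
  push_neg at ha hb
  refine ⟨w1 + w2, W.add_mem hw1W hw2W, ?_, ?_⟩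
  · intro h; exact hw1 (by have := S1.sub_mem h hb; simpa using this)
  · intro h; exact hw2 (by have := S2.sub_mem h ha; simpa using this)

private lemma ker_frank [FiniteDimensional F M] {φ : M →ₗ[F] F} {x : M} (hx : φ x ≠ 0) :
    finrank F (LinearMap.ker φ) = finrank F M - 1 := by
  have hsurj : Function.Surjective φ := by
    intro c
    refine ⟨(c * (φ x)⁻¹) • x, ?_⟩
    rw [map_smul, smul_eq_mul, mul_assoc, inv_mul_cancel₀ hx, mul_one]
  have hrange : LinearMap.range φ = ⊤ := LinearMap.range_eq_top.mpr hsurj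
  have h := LinearMap.finrank_range_add_finrank_ker φ
  rw [hrange, finrank_top, Module.finrank_self] at h
  omega

private lemma ker_frank_le [FiniteDimensional F M] (φ : M →ₗ[F] F) :
    finrank F M - 1 ≤ finrank F (LinearMap.ker φ) := by
  have h := LinearMap.finrank_range_add_finrank_ker φ
  have : finrank F (LinearMap.range φ) ≤ 1 := by
    simpa using (LinearMap.range φ).finrank_le
  omega

private lemma krank [FiniteDimensional F M] (f g : M →ₗ[F] F) :
    finrank F M - 2 ≤ finrank F ((LinearMap.ker f ⊓ LinearMap.ker g : Submodule F M)) := by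
  have h := Submodule.finrank_sup_add_finrank_inf_eq (LinearMap.ker f) (LinearMap.ker g)
  have h1 := ker_frank_le f
  have h2 := ker_frank_le g
  have h3 := (LinearMap.ker f ⊔ LinearMap.ker g).finrank_le
  omega

private lemma mem_span_of_ker_eq {f g : M →ₗ[F] F} (h : LinearMap.ker f = LinearMap.ker g) :
    f ∈ Submodule.span F {g} := by
  rcases eq_or_ne f 0 with rfl | hf
  · exact Submodule.zero_mem _
  obtain ⟨x, hx⟩ : ∃ x, f x ≠ 0 := by
    by_contra hc; push_neg at hc; exact hf (LinearMap.ext fun v => by simp [hc v])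
  have hgx : g x ≠ 0 := by
    intro h0
    exact hx (by rw [← LinearMap.mem_ker, h, LinearMap.mem_ker]; exact h0)
  rw [Submodule.mem_span_singleton]
  refine ⟨f x * (g x)⁻¹, ?_⟩
  ext v
  have hker : (g x) • v - (g v) • x ∈ LinearMap.ker f := by
    rw [h, LinearMap.mem_ker, map_sub, map_smul, map_smul, smul_eq_mul, smul_eq_mul]
    ring
  rw [LinearMap.mem_ker, map_sub, map_smul, map_smul, smul_eq_mul, smul_eq_mul,
    sub_eq_zero] at hker
  have : f v = f x * (g x)⁻¹ * g v := by
    field_simp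
    linear_combination hker
  simp [this]

private lemma ker_ne_of_not_mem_span {f g : M →ₗ[F] F} (h : f ∉ Submodule.span F {g}) :
    LinearMap.ker f ≠ LinearMap.ker g := fun he => h (mem_span_of_ker_eq he)

private lemma ker_ne_of_witness {f g : M →ₗ[F] F} {w : M} (h1 : f w = 0) (h2 : g w ≠ 0) :
    LinearMap.ker f ≠ LinearMap.ker g := by
  intro he
  exact h2 (by rw [← LinearMap.mem_ker, ← he, LinearMap.mem_ker]; exact h1)

private lemma sep_dual [FiniteDimensional F M] (W : Submodule F M) (v : M) (hv : v ∉ W) :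
    ∃ ψ : M →ₗ[F] F, (∀ w ∈ W, ψ w = 0) ∧ ψ v ≠ 0 := by
  have h0 : Submodule.Quotient.mk (p := W) v ≠ 0 := by
    rw [Ne, Submodule.Quotient.mk_eq_zero]; exact hv
  obtain ⟨f, hf⟩ : ∃ f : Module.Dual F (M ⧸ W), f (Submodule.Quotient.mk v) ≠ 0 := by
    by_contra hc; push_neg at hc
    exact h0 ((Module.forall_dual_apply_eq_zero_iff F _).mp hc)
  refine ⟨f.comp W.mkQ, fun w hw => ?_, hf⟩
  simp [Submodule.mkQ_apply, (Submodule.Quotient.mk_eq_zero W).mpr hw]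

/-- the workhorse existence lemma -/
private lemma exG [FiniteDimensional F M] (hn : 3 ≤ n) (hcard : 3 ≤ Cardinal.mk F ∨ 4 ≤ n)
    (hfr : finrank F M = n) (f g : M →ₗ[F] F) (x0 : M) (S : Submodule F M)
    (hxT : f x0 ≠ 0 ∨ g x0 ≠ 0) (hxS : x0 ∉ S) :
    ∃ y : M, f y = f x0 ∧ g y = g x0 ∧ y ∉ S ∧ y ∉ Submodule.span F {x0} := by
  have hk := krank f g
  rw [hfr] at hk
  have hxT' : x0 ∉ (LinearMap.ker f ⊓ LinearMap.ker g : Submodule F M) := by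
    rw [Submodule.mem_inf, LinearMap.mem_ker, LinearMap.mem_ker]
    rcases hxT with h | h
    · exact fun hc => h hc.1
    · exact fun hc => h hc.2
  obtain ⟨t, htT, htS, htsp⟩ := helperG (LinearMap.ker f ⊓ LinearMap.ker g) S x0 hxT' hxS
    (by omega) (by rcases hcard with h | h; exacts [Or.inl h, Or.inr (by omega)])
  rw [Submodule.mem_inf, LinearMap.mem_ker, LinearMap.mem_ker] at htT
  exact ⟨x0 + t, by rw [map_add, htT.1, add_zero], by rw [map_add, htT.2, add_zero], htS, htsp⟩

end Helpers

/-! ### AntiFlag helpers -/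

section AF

private lemma frankV : finrank F (Fin n → F) = n := Module.finrank_fin_fun F

private lemma frankD : finrank F (Module.Dual F (Fin n → F)) = n := by
  rw [Subspace.dual_finrank_eq]; exact frankV

private lemma ker_frank' {φ : Module.Dual F (Fin n → F)} {x : Fin n → F} (hx : φ x ≠ 0) :
    finrank F (LinearMap.ker φ) = n - 1 := by
  rw [ker_frank hx, frankV]

/-- make an antiflag from a vector and a functional -/
private noncomputable def mkAF (q : Fin n → F) (ψ : Module.Dual F (Fin n → F))
    (h : ψ q ≠ 0) : AntiFlag F n where
  pt := Submodule.span F {q}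
  hyp := LinearMap.ker ψ
  pt_rank := finrank_span_singleton (fun h0 => h (by rw [h0, map_zero]))
  hyp_rank := ker_frank' h
  not_incident := by
    rw [Submodule.span_singleton_le_iff_mem, LinearMap.mem_ker]
    exact h

@[simp] private lemma mkAF_pt (q : Fin n → F) (ψ) (h) :
    (mkAF q ψ h).pt = Submodule.span F {q} := rfl
@[simp] private lemma mkAF_hyp (q : Fin n → F) (ψ) (h) :
    (mkAF q ψ h).hyp = LinearMap.ker ψ := rfl

private lemma AntiFlag.ext' {A B : AntiFlag F n} (h1 : A.pt = B.pt) (h2 : A.hyp = B.hyp) :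
    A = B := by
  cases A; cases B; simp_all

private lemma af_ne_of_pt_ne {A B : AntiFlag F n} (h : A.pt ≠ B.pt) : A ≠ B :=
  fun he => h (he ▸ rfl)

private lemma span_ne_of_not_mem {q u : Fin n → F} (h : q ∉ Submodule.span F {u}) :
    Submodule.span F {q} ≠ Submodule.span F {u} :=
  fun he => h (he ▸ Submodule.mem_span_singleton_self q)

private lemma span_eq_of_mem {q u : Fin n → F} (h : q ∈ Submodule.span F {u}) (hq : q ≠ 0) :
    Submodule.span F {q} = Submodule.span F {u} := by
  rw [Submodule.mem_span_singleton] at h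
  obtain ⟨c, hc⟩ := h
  have hc0 : c ≠ 0 := by rintro rfl; rw [zero_smul] at hc; exact hq hc.symm
  apply le_antisymm
  · rw [Submodule.span_singleton_le_iff_mem, Submodule.mem_span_singleton]
    exact ⟨c, hc⟩
  · rw [Submodule.span_singleton_le_iff_mem, Submodule.mem_span_singleton]
    exact ⟨c⁻¹, by rw [← hc, smul_smul, inv_mul_cancel₀ hc0, one_smul]⟩

private lemma span_le_ker_iff {q : Fin n → F} {ψ : Module.Dual F (Fin n → F)} :
    Submodule.span F {q} ≤ LinearMap.ker ψ ↔ ψ q = 0 := by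
  rw [Submodule.span_singleton_le_iff_mem, LinearMap.mem_ker]

private lemma not_incident' {A : AntiFlag F n} {w : Fin n → F} {φ : Module.Dual F (Fin n → F)}
    (hp : A.pt = Submodule.span F {w}) (hh : A.hyp = LinearMap.ker φ) : φ w ≠ 0 := by
  have := A.not_incident
  rw [hp, hh, span_le_ker_iff] at this
  exact this

private lemma adj4_symm {A B : AntiFlag F n} (h : adj4 A B) : adj4 B A :=
  ⟨h.1.symm, h.2.1.symm, h.2.2.1.symm, h.2.2.2.2, h.2.2.2.1⟩

private lemma mem_perp_pair {A B C : AntiFlag F n} :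
    C ∈ perpSet adj4 {A, B} ↔ adj4 A C ∧ adj4 B C := by
  simp [perpSet]

/-- The key adjacency constructor. -/
private lemma adj4_mk {A : AntiFlag F n} {w : Fin n → F} {φ : Module.Dual F (Fin n → F)}
    (hApt : A.pt = Submodule.span F {w}) (hAh : A.hyp = LinearMap.ker φ)
    {q : Fin n → F} {ψ : Module.Dual F (Fin n → F)} (hq : ψ q ≠ 0)
    (hfq : φ q ≠ 0) (hψw : ψ w ≠ 0) (hqw : q ∉ Submodule.span F {w})
    (hker : LinearMap.ker ψ ≠ LinearMap.ker φ) : adj4 A (mkAF q ψ hq) := by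
  have hpt : A.pt ≠ (mkAF q ψ hq).pt := by
    rw [hApt, mkAF_pt]
    exact (span_ne_of_not_mem hqw).symm
  refine ⟨af_ne_of_pt_ne hpt, hpt, ?_, ?_, ?_⟩
  · rw [hAh, mkAF_hyp]; exact hker.symm
  · rw [hApt, mkAF_hyp, span_le_ker_iff]; exact hψw
  · rw [hAh, mkAF_pt, span_le_ker_iff]; exact hfq

private lemma ker_eq_of_mem_span {f g : Module.Dual F (Fin n → F)} {x : Fin n → F}
    (h : f ∈ Submodule.span F {g}) (hf : f x ≠ 0) :
    LinearMap.ker f = LinearMap.ker g := by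
  rw [Submodule.mem_span_singleton] at h
  obtain ⟨c, hc⟩ := h
  have hc0 : c ≠ 0 := by
    rintro rfl; rw [zero_smul] at hc; rw [← hc] at hf; simp at hf
  rw [← hc]
  exact LinearMap.ker_smul g c hc0

end AF
section Main

private lemma pt_repr (A : AntiFlag F n) :
    ∃ u : Fin n → F, u ≠ 0 ∧ A.pt = Submodule.span F {u} := by
  have h1 : A.pt ≠ ⊥ := by
    intro hb
    have := A.pt_rank
    rw [hb, finrank_bot] at this; omega
  obtain ⟨u, huA, hu0⟩ := Submodule.exists_mem_ne_zero_of_ne_bot h1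
  refine ⟨u, hu0, ?_⟩
  refine (Submodule.eq_of_le_of_finrank_eq
    ((Submodule.span_singleton_le_iff_mem u A.pt).mpr huA) ?_).symm
  rw [finrank_span_singleton hu0, A.pt_rank]

private lemma hyp_repr (hn : 3 ≤ n) (A : AntiFlag F n) :
    ∃ φ : Module.Dual F (Fin n → F), A.hyp = LinearMap.ker φ := by
  have hne : A.hyp ≠ ⊤ := by
    intro ht
    have := A.hyp_rank
    rw [ht, finrank_top, frankV] at this
    omega
  obtain ⟨v, hv⟩ : ∃ v, v ∉ A.hyp := by
    by_contra hc; push_neg at hc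
    exact hne (Submodule.eq_top_iff'.mpr hc)
  obtain ⟨ψ, hker, hψv⟩ := sep_dual A.hyp v hv
  refine ⟨ψ, ?_⟩
  have hle : A.hyp ≤ LinearMap.ker ψ := fun w hw => (LinearMap.mem_ker).mpr (hker w hw)
  refine (Submodule.eq_of_le_of_finrank_eq hle ?_)
  rw [A.hyp_rank, ker_frank' hψv]

/-- evaluation as a functional on the dual -/
private abbrev evv (a : Fin n → F) : Module.Dual F (Fin n → F) →ₗ[F] F :=
  Module.Dual.eval F (Fin n → F) a

@[simp] private lemma evv_apply (a : Fin n → F) (ψ : Module.Dual F (Fin n → F)) :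
    evv a ψ = ψ a := rfl

private lemma step1bc (hn : 3 ≤ n) (hcard : 3 ≤ Cardinal.mk F ∨ 4 ≤ n)
    {u r : Fin n → F} {f g : Module.Dual F (Fin n → F)}
    (hfu : f u ≠ 0) (hgu : g u ≠ 0) (hsfg : f ∉ Submodule.span F {g}) (hfr : f r = 0) :
    ∃ (q : Fin n → F) (ψ : Module.Dual F (Fin n → F)),
      ψ q ≠ 0 ∧ f q ≠ 0 ∧ g q ≠ 0 ∧ ψ u ≠ 0 ∧ q ∉ Submodule.span F {u} ∧
      LinearMap.ker ψ ≠ LinearMap.ker f ∧ LinearMap.ker ψ ≠ LinearMap.ker g ∧ ψ r = 0 := by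
  obtain ⟨ψ, hψr, hψu, hψS, hψsp⟩ := exG hn hcard frankD (evv r) (evv u) f
    (Submodule.span F {g}) (Or.inr (by simpa using hfu)) hsfg
  simp only [evv_apply] at hψr hψu
  have hψu' : ψ u ≠ 0 := by rw [hψu]; exact hfu
  obtain ⟨q, hfq, hgq, hqS, hqsp⟩ := exG hn hcard frankV f g u (LinearMap.ker ψ)
    (Or.inl hfu) (by rw [LinearMap.mem_ker]; exact hψu')
  refine ⟨q, ψ, ?_, by rw [hfq]; exact hfu, by rw [hgq]; exact hgu, hψu', hqsp,
    ker_ne_of_not_mem_span hψsp, ker_ne_of_not_mem_span hψS, by rw [hψr]; exact hfr⟩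
  intro h0; exact hqS (LinearMap.mem_ker.mpr h0)

private lemma step1bc' (hn : 3 ≤ n) (hcard : 3 ≤ Cardinal.mk F ∨ 4 ≤ n)
    {u1 u2 : Fin n → F} {φ ψD : Module.Dual F (Fin n → F)}
    (hφ1 : φ u1 ≠ 0) (hφ2 : φ u2 ≠ 0) (hd1 : ψD u1 = 0)
    (hu12 : u1 ∉ Submodule.span F {u2}) :
    ∃ (q : Fin n → F) (ψ : Module.Dual F (Fin n → F)),
      ψ q ≠ 0 ∧ φ q ≠ 0 ∧ q ∉ Submodule.span F {u1} ∧ q ∉ Submodule.span F {u2} ∧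
      ψ u1 ≠ 0 ∧ ψ u2 ≠ 0 ∧ LinearMap.ker ψ ≠ LinearMap.ker φ ∧ ψD q = 0 := by
  obtain ⟨q, hφq, hψDq, hqS, hqsp⟩ := exG hn hcard frankV φ ψD u1
    (Submodule.span F {u2}) (Or.inl hφ1) hu12
  have hφq' : φ q ≠ 0 := by rw [hφq]; exact hφ1
  obtain ⟨ψ, hψ1, hψ2, hψS, hψsp⟩ := exG hn hcard frankD (evv u1) (evv u2) φ
    (LinearMap.ker (evv q)) (Or.inl (by simpa using hφ1))
    (by rw [LinearMap.mem_ker]; simpa using hφq')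
  simp only [evv_apply] at hψ1 hψ2
  refine ⟨q, ψ, ?_, hφq', hqsp, hqS, by rw [hψ1]; exact hφ1, by rw [hψ2]; exact hφ2,
    ker_ne_of_not_mem_span hψsp, by rw [hψDq]; exact hd1⟩
  intro h0; exact hψS (LinearMap.mem_ker.mpr (by simpa using h0))

end Main
private lemma keyM (hn : 3 ≤ n) (hcard : 3 ≤ Cardinal.mk F ∨ 4 ≤ n)
    (A1 A2 : AntiFlag F n) (h : adj3 A1 A2) (D : AntiFlag F n)
    (hD : ∀ C ∈ perpSet adj4 {A1, A2}, adj4 D C) : D = A1 ∨ D = A2 := by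
  obtain ⟨hne, hcase⟩ := h
  obtain ⟨u1, hu10, hA1p⟩ := pt_repr A1
  obtain ⟨φ1, hA1h⟩ := hyp_repr hn A1
  obtain ⟨u2, hu20, hA2p⟩ := pt_repr A2
  obtain ⟨φ2, hA2h⟩ := hyp_repr hn A2
  obtain ⟨r, hr0, hDp⟩ := pt_repr D
  obtain ⟨ψD, hDh⟩ := hyp_repr hn D
  have hDr : ψD r ≠ 0 := not_incident' hDp hDh
  have h1u1 : φ1 u1 ≠ 0 := not_incident' hA1p hA1h
  have h2u2 : φ2 u2 ≠ 0 := not_incident' hA2p hA2h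
  rcases hcase with hpt | hhyp
  · -- point case : A1.pt = A2.pt
    have hA2p' : A2.pt = Submodule.span F {u1} := by rw [← hpt, hA1p]
    have h2u1 : φ2 u1 ≠ 0 := not_incident' hA2p' hA2h
    have hk12 : LinearMap.ker φ1 ≠ LinearMap.ker φ2 := by
      intro he
      exact hne (AntiFlag.ext' hpt (by rw [hA1h, hA2h, he]))
    have hs12 : φ1 ∉ Submodule.span F {φ2} := fun hm => hk12 (ker_eq_of_mem_span hm h1u1)
    have hs21 : φ2 ∉ Submodule.span F {φ1} := fun hm => hk12.symm (ker_eq_of_mem_span hm h2u1)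
    by_cases hrspan : r ∈ Submodule.span F {u1}
    · -- D has the same point as A1, A2
      have hDpA : D.pt = A1.pt := by rw [hDp, hA1p, span_eq_of_mem hrspan hr0]
      have hψDu : ψD u1 ≠ 0 := by
        rw [Submodule.mem_span_singleton] at hrspan
        obtain ⟨c, hc⟩ := hrspan
        intro h0
        apply hDr
        rw [← hc, map_smul, smul_eq_mul, h0, mul_zero]
      by_cases hk1 : LinearMap.ker ψD = LinearMap.ker φ1
      · left; exact AntiFlag.ext' hDpA (by rw [hDh, hA1h, hk1])
      by_cases hk2 : LinearMap.ker ψD = LinearMap.ker φ2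
      · right; exact AntiFlag.ext' (hDpA.trans hpt) (by rw [hDh, hA2h, hk2])
      exfalso
      have hle1 : ¬ LinearMap.ker ψD ≤ LinearMap.ker φ1 := fun hle =>
        hk1 (Submodule.eq_of_le_of_finrank_eq hle (by rw [ker_frank' hDr, ker_frank' h1u1]))
      have hle2 : ¬ LinearMap.ker ψD ≤ LinearMap.ker φ2 := fun hle =>
        hk2 (Submodule.eq_of_le_of_finrank_eq hle (by rw [ker_frank' hDr, ker_frank' h2u1]))
      obtain ⟨q, hqW, hq1, hq2⟩ := avoid2 (SetLike.not_le_iff_exists.mp hle1)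
        (SetLike.not_le_iff_exists.mp hle2)
      rw [LinearMap.mem_ker] at hqW
      have hq1' : φ1 q ≠ 0 := by simpa [LinearMap.mem_ker] using hq1
      have hq2' : φ2 q ≠ 0 := by simpa [LinearMap.mem_ker] using hq2
      have hqu : q ∉ Submodule.span F {u1} := by
        intro hm
        rw [Submodule.mem_span_singleton] at hm
        obtain ⟨c, hc⟩ := hm
        have hc0 : c ≠ 0 := by
          rintro rfl; rw [zero_smul] at hc; exact hq1' (by rw [← hc, map_zero])
        apply hψDu
        have := hqW
        rw [← hc, map_smul, smul_eq_mul] at this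
        exact (mul_eq_zero.mp this).resolve_left hc0
      obtain ⟨ψ, hψq, hψu, hψS, hψsp⟩ := exG hn hcard frankD (evv q) (evv u1) φ1
        (Submodule.span F {φ2}) (Or.inl (by simpa using hq1')) hs12
      simp only [evv_apply] at hψq hψu
      have hqψ : ψ q ≠ 0 := by rw [hψq]; exact hq1'
      have hψu' : ψ u1 ≠ 0 := by rw [hψu]; exact h1u1
      have hC : mkAF q ψ hqψ ∈ perpSet adj4 {A1, A2} :=
        mem_perp_pair.mpr ⟨adj4_mk hA1p hA1h hqψ hq1' hψu' hqu (ker_ne_of_not_mem_span hψsp),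
          adj4_mk hA2p' hA2h hqψ hq2' hψu' hqu (ker_ne_of_not_mem_span hψS)⟩
      exact (hD _ hC).2.2.2.2 (by rw [mkAF_pt, hDh, span_le_ker_iff]; exact hqW)
    · exfalso
      by_cases h1r : φ1 r = 0
      · obtain ⟨q, ψ, hq, hfq, hgq, hψu, hqsp, hkf, hkg, hψr⟩ :=
          step1bc hn hcard h1u1 h2u1 hs12 h1r
        have hC : mkAF q ψ hq ∈ perpSet adj4 {A1, A2} :=
          mem_perp_pair.mpr ⟨adj4_mk hA1p hA1h hq hfq hψu hqsp hkf,
            adj4_mk hA2p' hA2h hq hgq hψu hqsp hkg⟩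
        exact (hD _ hC).2.2.2.1 (by rw [hDp, mkAF_hyp, span_le_ker_iff]; exact hψr)
      by_cases h2r : φ2 r = 0
      · obtain ⟨q, ψ, hq, hfq, hgq, hψu, hqsp, hkf, hkg, hψr⟩ :=
          step1bc hn hcard h2u1 h1u1 hs21 h2r
        have hC : mkAF q ψ hq ∈ perpSet adj4 {A1, A2} :=
          mem_perp_pair.mpr ⟨adj4_mk hA1p hA1h hq hgq hψu hqsp hkg,
            adj4_mk hA2p' hA2h hq hfq hψu hqsp hkf⟩
        exact (hD _ hC).2.2.2.1 (by rw [hDp, mkAF_hyp, span_le_ker_iff]; exact hψr)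
      · obtain ⟨ψ, hψr, hψu, hψS, hψsp⟩ := exG hn hcard frankD (evv r) (evv u1) φ1
          (Submodule.span F {φ2}) (Or.inl (by simpa using h1r)) hs12
        simp only [evv_apply] at hψr hψu
        have hrψ : ψ r ≠ 0 := by rw [hψr]; exact h1r
        have hψu' : ψ u1 ≠ 0 := by rw [hψu]; exact h1u1
        have hC : mkAF r ψ hrψ ∈ perpSet adj4 {A1, A2} :=
          mem_perp_pair.mpr ⟨adj4_mk hA1p hA1h hrψ h1r hψu' hrspan
              (ker_ne_of_not_mem_span hψsp),
            adj4_mk hA2p' hA2h hrψ h2r hψu' hrspan (ker_ne_of_not_mem_span hψS)⟩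
        exact (hD _ hC).2.1 (by rw [hDp, mkAF_pt])
  · -- hyperplane case : A1.hyp = A2.hyp
    have hA2h' : A2.hyp = LinearMap.ker φ1 := by rw [← hhyp, hA1h]
    have h1u2 : φ1 u2 ≠ 0 := not_incident' hA2p hA2h'
    have hpts : A1.pt ≠ A2.pt := fun he => hne (AntiFlag.ext' he hhyp)
    have hu12 : u1 ∉ Submodule.span F {u2} := fun hm =>
      hpts (by rw [hA1p, hA2p, span_eq_of_mem hm hu10])
    have hu21 : u2 ∉ Submodule.span F {u1} := fun hm =>
      hpts.symm (by rw [hA1p, hA2p, span_eq_of_mem hm hu20])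
    by_cases hk : LinearMap.ker ψD = LinearMap.ker φ1
    · -- D has the same hyperplane as A1, A2
      have hφr : φ1 r ≠ 0 := not_incident' hDp (hDh.trans hk)
      by_cases hp1 : r ∈ Submodule.span F {u1}
      · left
        exact AntiFlag.ext' (by rw [hDp, hA1p, span_eq_of_mem hp1 hr0])
          (by rw [hDh, hA1h, hk])
      by_cases hp2 : r ∈ Submodule.span F {u2}
      · right
        exact AntiFlag.ext' (by rw [hDp, hA2p, span_eq_of_mem hp2 hr0])
          (by rw [hDh, hA2h', hk])
      exfalso
      have hu1r : u1 ∉ Submodule.span F {r} := fun hm =>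
        hp1 ((span_eq_of_mem hm hu10) ▸ Submodule.mem_span_singleton_self r)
      have hu2r : u2 ∉ Submodule.span F {r} := fun hm =>
        hp2 ((span_eq_of_mem hm hu20) ▸ Submodule.mem_span_singleton_self r)
      obtain ⟨ψ1, hψ1k, hψ1u⟩ := sep_dual (Submodule.span F {r}) u1 hu1r
      obtain ⟨ψ2, hψ2k, hψ2u⟩ := sep_dual (Submodule.span F {r}) u2 hu2r
      obtain ⟨ψ, hψW, hψa, hψb⟩ := avoid2 (W := LinearMap.ker (evv r))
        (S1 := LinearMap.ker (evv u1)) (S2 := LinearMap.ker (evv u2))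
        ⟨ψ1, by rw [LinearMap.mem_ker]; simpa using hψ1k r (Submodule.mem_span_singleton_self r),
          by rw [LinearMap.mem_ker]; simpa using hψ1u⟩
        ⟨ψ2, by rw [LinearMap.mem_ker]; simpa using hψ2k r (Submodule.mem_span_singleton_self r),
          by rw [LinearMap.mem_ker]; simpa using hψ2u⟩
      rw [LinearMap.mem_ker] at hψW
      have hψr : ψ r = 0 := by simpa using hψW
      have hψu1 : ψ u1 ≠ 0 := by simpa [LinearMap.mem_ker] using hψa
      have hψu2 : ψ u2 ≠ 0 := by simpa [LinearMap.mem_ker] using hψb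
      have hkψ : LinearMap.ker ψ ≠ LinearMap.ker φ1 := ker_ne_of_witness hψr hφr
      obtain ⟨q, hφq, hψq, hqS, hqsp⟩ := exG hn hcard frankV φ1 ψ u1
        (Submodule.span F {u2}) (Or.inl h1u1) hu12
      have hqψ : ψ q ≠ 0 := by rw [hψq]; exact hψu1
      have hφq' : φ1 q ≠ 0 := by rw [hφq]; exact h1u1
      have hC : mkAF q ψ hqψ ∈ perpSet adj4 {A1, A2} :=
        mem_perp_pair.mpr ⟨adj4_mk hA1p hA1h hqψ hφq' hψu1 hqsp hkψ,
          adj4_mk hA2p hA2h' hqψ hφq' hψu2 hqS hkψ⟩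
      exact (hD _ hC).2.2.2.1 (by rw [hDp, mkAF_hyp, span_le_ker_iff]; exact hψr)
    · exfalso
      by_cases hd1 : ψD u1 = 0
      · obtain ⟨q, ψ, hq, hφq, hq1, hq2, hψ1, hψ2, hkψ, hψDq⟩ :=
          step1bc' hn hcard h1u1 h1u2 hd1 hu12
        have hC : mkAF q ψ hq ∈ perpSet adj4 {A1, A2} :=
          mem_perp_pair.mpr ⟨adj4_mk hA1p hA1h hq hφq hψ1 hq1 hkψ,
            adj4_mk hA2p hA2h' hq hφq hψ2 hq2 hkψ⟩
        exact (hD _ hC).2.2.2.2 (by rw [mkAF_pt, hDh, span_le_ker_iff]; exact hψDq)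
      by_cases hd2 : ψD u2 = 0
      · obtain ⟨q, ψ, hq, hφq, hq2, hq1, hψ2, hψ1, hkψ, hψDq⟩ :=
          step1bc' hn hcard h1u2 h1u1 hd2 hu21
        have hC : mkAF q ψ hq ∈ perpSet adj4 {A1, A2} :=
          mem_perp_pair.mpr ⟨adj4_mk hA1p hA1h hq hφq hψ1 hq1 hkψ,
            adj4_mk hA2p hA2h' hq hφq hψ2 hq2 hkψ⟩
        exact (hD _ hC).2.2.2.2 (by rw [mkAF_pt, hDh, span_le_ker_iff]; exact hψDq)
      · obtain ⟨q, hφq, hψDq, hqS, hqsp⟩ := exG hn hcard frankV φ1 ψD u1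
          (Submodule.span F {u2}) (Or.inl h1u1) hu12
        have hqψ : ψD q ≠ 0 := by rw [hψDq]; exact hd1
        have hφq' : φ1 q ≠ 0 := by rw [hφq]; exact h1u1
        have hC : mkAF q ψD hqψ ∈ perpSet adj4 {A1, A2} :=
          mem_perp_pair.mpr ⟨adj4_mk hA1p hA1h hqψ hφq' hd1 hqsp hk,
            adj4_mk hA2p hA2h' hqψ hφq' hd2 hqS hk⟩
        exact (hD _ hC).2.2.1 (by rw [hDh, mkAF_hyp])
theorem stmt8 (hn : 3 ≤ n) (hcard : 3 ≤ Cardinal.mk F ∨ 4 ≤ n)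
    (A1 A2 : AntiFlag F n) (h : adj3 A1 A2) :
    (∀ Y ∈ famX F n, ¬ perpSet adj4 {A1, A2} ⊂ Y) ∧
    (∃ Y ∈ famX F n, Y ⊂ perpSet adj4 {A1, A2}) := by
  constructor
  · rintro Y ⟨B1, B2, hBne, hB4, rfl⟩ hss
    rw [Set.ssubset_iff_subset_ne] at hss
    obtain ⟨hsub, hne'⟩ := hss
    have hB1 : ∀ C ∈ perpSet adj4 {A1, A2}, adj4 B1 C :=
      fun C hC => (mem_perp_pair.mp (hsub hC)).1
    have hB2 : ∀ C ∈ perpSet adj4 {A1, A2}, adj4 B2 C :=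
      fun C hC => (mem_perp_pair.mp (hsub hC)).2
    have k1 := keyM hn hcard A1 A2 h B1 hB1
    have k2 := keyM hn hcard A1 A2 h B2 hB2
    apply hne'
    rcases k1 with rfl | rfl <;> rcases k2 with rfl | rfl
    · exact absurd rfl hBne
    · rfl
    · rw [Set.pair_comm]
    · exact absurd rfl hBne
  · obtain ⟨hne, hcase⟩ := h
    obtain ⟨u1, hu10, hA1p⟩ := pt_repr A1
    obtain ⟨φ1, hA1h⟩ := hyp_repr hn A1
    obtain ⟨u2, hu20, hA2p⟩ := pt_repr A2
    obtain ⟨φ2, hA2h⟩ := hyp_repr hn A2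
    have h1u1 : φ1 u1 ≠ 0 := not_incident' hA1p hA1h
    have h2u2 : φ2 u2 ≠ 0 := not_incident' hA2p hA2h
    rcases hcase with hpt | hhyp
    · -- point case
      have hA2p' : A2.pt = Submodule.span F {u1} := by rw [← hpt, hA1p]
      have h2u1 : φ2 u1 ≠ 0 := not_incident' hA2p' hA2h
      have hk12 : LinearMap.ker φ1 ≠ LinearMap.ker φ2 := by
        intro he
        exact hne (AntiFlag.ext' hpt (by rw [hA1h, hA2h, he]))
      have hle : ¬ LinearMap.ker φ1 ≤ LinearMap.ker φ2 := fun hle =>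
        hk12 (Submodule.eq_of_le_of_finrank_eq hle (by rw [ker_frank' h1u1, ker_frank' h2u1]))
      obtain ⟨c, hcW, hc2⟩ := SetLike.not_le_iff_exists.mp hle
      rw [LinearMap.mem_ker] at hcW
      have hc2' : φ2 c ≠ 0 := by simpa [LinearMap.mem_ker] using hc2
      have hu1c : u1 ∉ Submodule.span F {c} := by
        intro hm
        rw [Submodule.mem_span_singleton] at hm
        obtain ⟨a, ha⟩ := hm
        exact h1u1 (by rw [← ha, map_smul, smul_eq_mul, hcW, mul_zero])
      have hBne : A1 ≠ mkAF c φ2 hc2' := af_ne_of_pt_ne (by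
        rw [hA1p, mkAF_pt]
        exact fun he => hu1c (he ▸ Submodule.mem_span_singleton_self u1))
      have hnadj : ¬ adj4 A1 (mkAF c φ2 hc2') := fun ha =>
        ha.2.2.2.2 (by rw [mkAF_pt, hA1h, span_le_ker_iff]; exact hcW)
      refine ⟨perpSet adj4 {A1, mkAF c φ2 hc2'}, ⟨A1, _, hBne, hnadj, rfl⟩, ?_⟩
      rw [Set.ssubset_def]
      constructor
      · intro C hC
        obtain ⟨hCA1, hCB2⟩ := mem_perp_pair.mp hC
        refine mem_perp_pair.mpr ⟨hCA1, ?_⟩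
        obtain ⟨c1, c2, c3, c4, c5⟩ := hCA1
        obtain ⟨d1, d2, d3, d4, d5⟩ := hCB2
        rw [mkAF_hyp] at d3 d5
        refine ⟨af_ne_of_pt_ne ?_, ?_, ?_, ?_, ?_⟩
        · rw [← hpt]; exact c2
        · rw [← hpt]; exact c2
        · rw [hA2h]; exact d3
        · rw [← hpt]; exact c4
        · rw [hA2h]; exact d5
      · -- strictness
        obtain ⟨ψ, hψc, hψu, hψS, hψsp⟩ := exG hn hcard frankD (evv c) (evv u1) φ1 ⊥
          (Or.inr (by simpa using h1u1))
          (by rw [Submodule.mem_bot]; intro h0; exact h1u1 (by rw [h0]; rfl))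
        simp only [evv_apply] at hψc hψu
        have hψc0 : ψ c = 0 := by rw [hψc, hcW]
        have hψu' : ψ u1 ≠ 0 := by rw [hψu]; exact h1u1
        obtain ⟨q, hq1, hq2, hqS, hqsp⟩ := exG hn hcard frankV φ1 φ2 u1 (LinearMap.ker ψ)
          (Or.inl h1u1) (by rw [LinearMap.mem_ker]; exact hψu')
        have hqψ : ψ q ≠ 0 := fun h0 => hqS (LinearMap.mem_ker.mpr h0)
        have hC0X : mkAF q ψ hqψ ∈ perpSet adj4 {A1, A2} :=
          mem_perp_pair.mpr ⟨adj4_mk hA1p hA1h hqψ (by rw [hq1]; exact h1u1) hψu' hqsp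
              (ker_ne_of_not_mem_span hψsp),
            adj4_mk hA2p' hA2h hqψ (by rw [hq2]; exact h2u1) hψu' hqsp
              (ker_ne_of_witness hψc0 hc2')⟩
        intro hsub2
        have hadj := (mem_perp_pair.mp (hsub2 hC0X)).2
        exact hadj.2.2.2.1 (by rw [mkAF_pt, mkAF_hyp, span_le_ker_iff]; exact hψc0)
    · -- hyperplane case
      have hA2h' : A2.hyp = LinearMap.ker φ1 := by rw [← hhyp, hA1h]
      have h1u2 : φ1 u2 ≠ 0 := not_incident' hA2p hA2h'
      have hpts : A1.pt ≠ A2.pt := fun he => hne (AntiFlag.ext' he hhyp)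
      have hu12 : u1 ∉ Submodule.span F {u2} := fun hm =>
        hpts (by rw [hA1p, hA2p, span_eq_of_mem hm hu10])
      have hu21 : u2 ∉ Submodule.span F {u1} := fun hm =>
        hpts.symm (by rw [hA1p, hA2p, span_eq_of_mem hm hu20])
      obtain ⟨χ, hχk, hχ2⟩ := sep_dual (Submodule.span F {u1}) u2 hu21
      have hχ1 : χ u1 = 0 := hχk u1 (Submodule.mem_span_singleton_self u1)
      have hBne : A1 ≠ mkAF u2 χ hχ2 := af_ne_of_pt_ne (by
        rw [hA1p, mkAF_pt]
        exact fun he => hu12 (he ▸ Submodule.mem_span_singleton_self u1))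
      have hnadj : ¬ adj4 A1 (mkAF u2 χ hχ2) := fun ha =>
        ha.2.2.2.1 (by rw [hA1p, mkAF_hyp, span_le_ker_iff]; exact hχ1)
      refine ⟨perpSet adj4 {A1, mkAF u2 χ hχ2}, ⟨A1, _, hBne, hnadj, rfl⟩, ?_⟩
      rw [Set.ssubset_def]
      constructor
      · intro C hC
        obtain ⟨hCA1, hCB2⟩ := mem_perp_pair.mp hC
        refine mem_perp_pair.mpr ⟨hCA1, ?_⟩
        obtain ⟨c1, c2, c3, c4, c5⟩ := hCA1
        obtain ⟨d1, d2, d3, d4, d5⟩ := hCB2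
        rw [mkAF_pt] at d2 d4
        refine ⟨af_ne_of_pt_ne ?_, ?_, ?_, ?_, ?_⟩
        · rw [hA2p]; exact d2
        · rw [hA2p]; exact d2
        · rw [← hhyp]; exact c3
        · rw [hA2p]; exact d4
        · rw [← hhyp]; exact c5
      · -- strictness
        obtain ⟨q, hq1, hqχ, hqS, hqsp⟩ := exG hn hcard frankV φ1 χ u1
          (Submodule.span F {u2}) (Or.inl h1u1) hu12
        have hqχ0 : χ q = 0 := by rw [hqχ, hχ1]
        have hφ1q : φ1 q ≠ 0 := by rw [hq1]; exact h1u1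
        obtain ⟨ψ, hψ1, hψ2, hψS, hψsp⟩ := exG hn hcard frankD (evv u1) (evv u2) φ1
          (LinearMap.ker (evv q)) (Or.inl (by simpa using h1u1))
          (by rw [LinearMap.mem_ker]; simpa using hφ1q)
        simp only [evv_apply] at hψ1 hψ2
        have hψ1' : ψ u1 ≠ 0 := by rw [hψ1]; exact h1u1
        have hψ2' : ψ u2 ≠ 0 := by rw [hψ2]; exact h1u2
        have hqψ : ψ q ≠ 0 := fun h0 => hψS (LinearMap.mem_ker.mpr (by simpa using h0))
        have hkψ : LinearMap.ker ψ ≠ LinearMap.ker φ1 := ker_ne_of_not_mem_span hψsp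
        have hC0X : mkAF q ψ hqψ ∈ perpSet adj4 {A1, A2} :=
          mem_perp_pair.mpr ⟨adj4_mk hA1p hA1h hqψ hφ1q hψ1' hqsp hkψ,
            adj4_mk hA2p hA2h' hqψ hφ1q hψ2' hqS hkψ⟩
        intro hsub2
        have hadj := (mem_perp_pair.mp (hsub2 hC0X)).2
        exact hadj.2.2.2.2 (by rw [mkAF_pt, mkAF_hyp, span_le_ker_iff]; exact hqχ0)
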